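/- With the same operator action, the quotient A' = K[x,x^{-1}]/A(m), identified with the span of {x^i : i ∈ ℤ, i < 0 or 1 ≤ i ≤ m-1}, is a simple module over the algebra generated by h, δ_{±1}, δ_{±2}: every nonzero invariant subspace equals A'. -/

import Mathlib

open Polynomial LaurentPolynomial

/-- The operator `f(h)x^a` of the skew Laurent ring `K[h][x,x⁻¹;σ]`, `σ(h) = h-1`,
acting on `K[x,x⁻¹]` by `(f(h)x^a) ∗ x^j = f(a+j+1) x^{a+j}`
(so that `h ∗ x^j = (j+1) x^j` and `x^{±1} ∗ x^j = x^{j±1}`). -/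
noncomputable def op (K : Type*) [Field K] (f : Polynomial K) (a : ℤ) :
    LaurentPolynomial K →ₗ[K] LaurentPolynomial K :=
  (Finsupp.lsum K fun j : ℤ =>
    f.eval ((a + j + 1 : ℤ) : K) •
      LinearMap.toSpanSingleton K (LaurentPolynomial K) (LaurentPolynomial.T (a + j)))
  ∘ₗ (AddMonoidAlgebra.coeffLinearEquiv K).toLinearMap

/-- `A(m) = K + Σ_{i ≥ m} K x^i`, as a subspace of `K[x,x⁻¹]`. -/
noncomputable def Am (K : Type*) [Field K] (m : ℕ) : Submodule K (LaurentPolynomial K) :=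
  Submodule.span K {p : LaurentPolynomial K | ∃ i : ℤ, (i = 0 ∨ (m : ℤ) ≤ i) ∧ p = T i}

/-- Projection of `K[x,x⁻¹]` onto the complement `A' = span{x^i : i ∈ E'}` of
`A(m)`, where `E' = ℤ \ ({0} ∪ {i : i ≥ m})`; it realizes the quotient action of
operators on `A' = K[x,x⁻¹]/A(m)`. -/
noncomputable def projE (K : Type*) [Field K] (m : ℕ) :
    LaurentPolynomial K →ₗ[K] LaurentPolynomial K :=
  (Finsupp.lsum K fun j : ℤ =>
    if j = 0 ∨ (m : ℤ) ≤ j then 0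
    else LinearMap.toSpanSingleton K (LaurentPolynomial K) (LaurentPolynomial.T j))
  ∘ₗ (AddMonoidAlgebra.coeffLinearEquiv K).toLinearMap

/-- `A' = span_K {x^i : i ∈ E'}`, `E' = ℤ \ ({0} ∪ {i : i ≥ m})`. -/
noncomputable def Am' (K : Type*) [Field K] (m : ℕ) : Submodule K (LaurentPolynomial K) :=
  Submodule.span K
    {p : LaurentPolynomial K | ∃ i : ℤ, ¬(i = 0 ∨ (m : ℤ) ≤ i) ∧ p = T i}

/-! The operator `h` acts diagonally on the basis `x^i` (`i ∈ E'`) of `A'` with the pairwise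
distinct eigenvalues `i + 1`, so a nonzero invariant subspace contains some `x^i`. Inside each of
the two intervals `i < 0` and `1 ≤ i ≤ m - 1` of `E'` the operators `δ₁`, `δ₋₁` move `x^i` to
`x^{i ± 1}` with a nonzero coefficient, and `δ₂`, `δ₋₂` connect `x^{-1}` with `x^1`; hence the
subspace contains every `x^i`. -/
section Action
variable {K : Type*} [Field K] {m : ℕ}

lemma single_eq_smul_T (k : ℤ) (c : K) : (AddMonoidAlgebra.single k c : K[T;T⁻¹]) = c • T k := by
  rw [single_eq_C_mul_T, LaurentPolynomial.smul_eq_C_mul]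

lemma op_T (f : K[X]) (a k : ℤ) :
    op K f a (T k) = f.eval ((a + k + 1 : ℤ) : K) • T (a + k) := by
  rw [op, LinearMap.comp_apply, LinearEquiv.coe_coe, AddMonoidAlgebra.coeffLinearEquiv_apply, T,
    AddMonoidAlgebra.coeff_single, Finsupp.lsum_single, LinearMap.smul_apply,
    LinearMap.toSpanSingleton_apply, one_smul, T]

lemma projE_T (k : ℤ) :
    projE K m (T k) = if k = 0 ∨ (m : ℤ) ≤ k then 0 else T k := by
  rw [projE, LinearMap.comp_apply, LinearEquiv.coe_coe, AddMonoidAlgebra.coeffLinearEquiv_apply, T,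
    AddMonoidAlgebra.coeff_single, Finsupp.lsum_single]
  split_ifs
  · rfl
  · rw [LinearMap.toSpanSingleton_apply, one_smul, T]

lemma projE_op_T (f : K[X]) (a k : ℤ) :
    (projE K m ∘ₗ op K f a) (T k) =
      if a + k = 0 ∨ (m : ℤ) ≤ a + k then 0 else f.eval ((a + k + 1 : ℤ) : K) • T (a + k) := by
  rw [LinearMap.comp_apply, op_T, map_smul, projE_T]
  split_ifs <;> simp

lemma coeff_projE_op_X_zero (v : K[T;T⁻¹]) (j : ℤ) :
    ((projE K m ∘ₗ op K X 0) v).coeff j =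
      (if j = 0 ∨ (m : ℤ) ≤ j then 0 else ((j + 1 : ℤ) : K)) * v.coeff j := by
  induction v using AddMonoidAlgebra.induction_linear with
  | zero => simp
  | add p q hp hq => rw [map_add, AddMonoidAlgebra.coeff_add, Finsupp.add_apply, hp, hq,
      AddMonoidAlgebra.coeff_add, Finsupp.add_apply, mul_add]
  | single k c =>
    rw [single_eq_smul_T, map_smul, projE_op_T, zero_add]
    by_cases hkj : k = j
    · subst hkj; split_ifs <;> simp [mul_comm]
    · split_ifs <;> simp [hkj]

lemma Am'_eq_supported :
    Am' K m = AddMonoidAlgebra.supported K K {i : ℤ | ¬(i = 0 ∨ (m : ℤ) ≤ i)} := by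
  rw [AddMonoidAlgebra.supported_eq_span_single, Am']
  congr 1
  ext p
  simp only [Set.mem_image, Set.mem_ofPred_eq, T, eq_comm]

end Action

theorem exists_T_mem_of_map_le {K : Type*} [Field K] {V : Submodule K K[T;T⁻¹]} {S : Set ℤ}
    (hVS : V ≤ AddMonoidAlgebra.supported K K S) (D : K[T;T⁻¹] →ₗ[K] K[T;T⁻¹]) (μ : ℤ → K)
    (hμ : S.InjOn μ) (hD : ∀ v j, (D v).coeff j = μ j * v.coeff j) (hDV : V.map D ≤ V)
    (hV : V ≠ ⊥) : ∃ i ∈ S, T i ∈ V := by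
  obtain ⟨v, hvV, hv0⟩ := Submodule.exists_mem_ne_zero_of_ne_bot hV
  induction hn : v.coeff.support.card using Nat.strong_induction_on generalizing v with
  | _ n ih =>
  have hvS : ↑v.coeff.support ⊆ S := hVS hvV
  obtain ⟨i, hi⟩ := Finsupp.support_nonempty_iff.mpr (AddMonoidAlgebra.coeff_eq_zero.not.mpr hv0)
  by_cases hsub : v.coeff.support ⊆ {i}
  · have hv : v = v.coeff i • T i := by
      rw [← single_eq_smul_T]
      exact AddMonoidAlgebra.coeff_injective (Finsupp.support_subset_singleton.mp hsub)
    refine ⟨i, hvS hi, ?_⟩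
    rw [← inv_smul_smul₀ (Finsupp.mem_support_iff.mp hi) (T i : K[T;T⁻¹]), ← hv]
    exact V.smul_mem _ hvV
  obtain ⟨j, hj, hji⟩ := Finset.not_subset.mp hsub
  rw [Finset.mem_singleton] at hji
  set w := D v - μ j • v
  have hw : ∀ k, w.coeff k = (μ k - μ j) * v.coeff k := fun k => by
    simp [w, hD, sub_mul]
  have hwV : w ∈ V := V.sub_mem (hDV (Submodule.mem_map_of_mem hvV)) (V.smul_mem _ hvV)
  have hwi : w.coeff i ≠ 0 := by
    rw [hw]
    exact mul_ne_zero (sub_ne_zero.mpr fun h => hji (hμ (hvS hj) (hvS hi) h.symm))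
      (Finsupp.mem_support_iff.mp hi)
  have hw_supp : w.coeff.support ⊆ v.coeff.support.erase j := by
    intro k hk
    rw [Finsupp.mem_support_iff, hw] at hk
    refine Finset.mem_erase.mpr ⟨fun hkj => ?_, Finsupp.mem_support_iff.mpr ?_⟩
    · simp [hkj] at hk
    · exact right_ne_zero_of_mul hk
  have hcard : w.coeff.support.card < n :=
    hn ▸ (Finset.card_le_card hw_supp).trans_lt (Finset.card_erase_lt_of_mem hj)
  exact ih _ hcard w hwV (fun h => hwi (by rw [h]; rfl)) rfl

lemma Int.le_induction_Icc {P : ℤ → Prop} {a b : ℤ} (hab : a ≤ b) (ha : P a)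
    (hstep : ∀ k, a ≤ k → k < b → P k → P (k + 1)) : P b := by
  induction b, hab using Int.leInduction with
  | base => exact ha
  | succ n han ih => exact hstep n han (by omega) (ih fun k hak hkn => hstep k hak (by omega))

lemma Int.le_induction_down_Icc {P : ℤ → Prop} {a b : ℤ} (hab : a ≤ b) (hb : P b)
    (hstep : ∀ k, a < k → k ≤ b → P k → P (k - 1)) : P a := by
  induction a, hab using Int.leInductionDown with
  | base => exact hb
  | pred n hnb ih => exact hstep n (by omega) hnb (ih fun k hnk hkb => hstep k (by omega) hkb)

section Ladder
variable {K : Type*} [Field K] {m : ℕ} {V : Submodule K K[T;T⁻¹]}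

lemma T_add_mem {f : K[X]} {a k : ℤ} (hV : V.map (projE K m ∘ₗ op K f a) ≤ V) (hk : T k ∈ V)
    (hak : ¬(a + k = 0 ∨ (m : ℤ) ≤ a + k)) (hf : f.eval ((a + k + 1 : ℤ) : K) ≠ 0) :
    T (a + k) ∈ V := by
  have h := hV (Submodule.mem_map_of_mem hk)
  rw [projE_op_T, if_neg hak] at h
  simpa only [inv_smul_smul₀ hf] using V.smul_mem (f.eval ((a + k + 1 : ℤ) : K))⁻¹ h

variable [CharZero K]

lemma T_succ_mem (h1 : V.map (projE K m ∘ₗ op K (X - Polynomial.C 2) 1) ≤ V) {k : ℤ}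
    (hk : T k ∈ V) (hk0 : k ≠ 0) (hk1 : ¬(k + 1 = 0 ∨ (m : ℤ) ≤ k + 1)) : T (k + 1) ∈ V := by
  rw [add_comm] at hk1 ⊢
  refine T_add_mem h1 hk hk1 ?_
  rw [eval_sub, eval_X, eval_C, show ((1 + k + 1 : ℤ) : K) - 2 = k by push_cast; ring]
  exact_mod_cast hk0

lemma T_pred_mem (hneg1 : V.map (projE K m ∘ₗ op K (X * (X - Polynomial.C (m : K))) (-1)) ≤ V)
    {k : ℤ} (hk : T k ∈ V) (hk0 : k ≠ 0) (hkm : k < m) (hk1 : k - 1 ≠ 0) : T (k - 1) ∈ V := by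
  rw [sub_eq_neg_add] at hk1 ⊢
  refine T_add_mem hneg1 hk (by omega) ?_
  rw [eval_mul, eval_sub, eval_X, eval_C, show ((-1 + k + 1 : ℤ) : K) = k by push_cast; ring]
  have hkm' : (k : K) ≠ m := by exact_mod_cast hkm.ne
  exact mul_ne_zero (by exact_mod_cast hk0) (sub_ne_zero.mpr hkm')

lemma T_one_mem (hm : 2 ≤ m) (h2 : V.map (projE K m ∘ₗ op K (X - Polynomial.C 3) 2) ≤ V)
    (hT : T (-1) ∈ V) : T 1 ∈ V := by
  simpa using T_add_mem h2 hT (by omega) (by norm_num)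

lemma T_neg_one_mem (hm : 2 ≤ m)
    (hneg2 : V.map (projE K m ∘ₗ op K ((X + Polynomial.C 1) * (X - Polynomial.C ((m : K) - 1)) *
      (X - Polynomial.C (m : K))) (-2)) ≤ V) (hT : T 1 ∈ V) : T (-1) ∈ V := by
  have hm0 : (m : K) ≠ 0 := by exact_mod_cast (by omega : m ≠ 0)
  have hm1 : (m : K) ≠ 1 := by exact_mod_cast (by omega : m ≠ 1)
  simpa using T_add_mem hneg2 hT (by omega) (by simp [sub_eq_zero, hm0, hm1.symm])


lemma T_neg_one_mem_of_T_mem (hm : 2 ≤ m)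
    (h1 : V.map (projE K m ∘ₗ op K (X - Polynomial.C 2) 1) ≤ V)
    (hneg1 : V.map (projE K m ∘ₗ op K (X * (X - Polynomial.C (m : K))) (-1)) ≤ V)
    (hneg2 : V.map (projE K m ∘ₗ op K ((X + Polynomial.C 1) * (X - Polynomial.C ((m : K) - 1)) *
      (X - Polynomial.C (m : K))) (-2)) ≤ V)
    {i : ℤ} (hi : ¬(i = 0 ∨ (m : ℤ) ≤ i)) (hT : T i ∈ V) : T (-1) ∈ V := by
  rcases lt_or_gt_of_ne (not_or.mp hi).1 with hneg | hpos
  · exact Int.le_induction_Icc (P := fun k => T k ∈ V) (by omega) hT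
      fun k _ hk hTk => T_succ_mem h1 hTk (by omega) (by omega)
  · refine T_neg_one_mem hm hneg2 ?_
    exact Int.le_induction_down_Icc (P := fun k => T k ∈ V) (by omega) hT
      fun k hk _ hTk => T_pred_mem hneg1 hTk (by omega) (by omega) (by omega)

lemma T_mem_of_T_neg_one_mem (hm : 2 ≤ m)
    (h1 : V.map (projE K m ∘ₗ op K (X - Polynomial.C 2) 1) ≤ V)
    (hneg1 : V.map (projE K m ∘ₗ op K (X * (X - Polynomial.C (m : K))) (-1)) ≤ V)
    (h2 : V.map (projE K m ∘ₗ op K (X - Polynomial.C 3) 2) ≤ V)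
    (hT : T (-1) ∈ V) {j : ℤ} (hj : ¬(j = 0 ∨ (m : ℤ) ≤ j)) : T j ∈ V := by
  rcases lt_or_gt_of_ne (not_or.mp hj).1 with hneg | hpos
  · exact Int.le_induction_down_Icc (P := fun k => T k ∈ V) (by omega) hT
      fun k hk _ hTk => T_pred_mem hneg1 hTk (by omega) (by omega) (by omega)
  · exact Int.le_induction_Icc (P := fun k => T k ∈ V) (by omega) (T_one_mem hm h2 hT)
      fun k hk _ hTk => T_succ_mem h1 hTk (by omega) (by omega)

end Ladder

/-- the quotient `A' = K[x,x⁻¹]/A(m)`, identified with the span of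
`{x^i : i ∈ E'}` with the truncated (quotient) action of the operators `h`,
`δ₁ = (h-2)x`, `δ₋₁ = h(h-m)x⁻¹`, `δ₂ = (h-3)x²`, `δ₋₂ = (h+1)(h-m+1)(h-m)x⁻²`,
is a simple module over the algebra these generate: every nonzero invariant
subspace equals `A'`. -/
theorem stmt17 (K : Type*) [Field K] [CharZero K] (m : ℕ) (hm : 2 ≤ m)
    (V : Submodule K (LaurentPolynomial K)) (hVA : V ≤ Am' K m)
    (hh : Submodule.map (projE K m ∘ₗ op K X 0) V ≤ V)
    (h1 : Submodule.map (projE K m ∘ₗ op K (X - Polynomial.C 2) 1) V ≤ V)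
    (hneg1 : Submodule.map
      (projE K m ∘ₗ op K (X * (X - Polynomial.C (m : K))) (-1)) V ≤ V)
    (h2 : Submodule.map (projE K m ∘ₗ op K (X - Polynomial.C 3) 2) V ≤ V)
    (hneg2 : Submodule.map
      (projE K m ∘ₗ op K ((X + Polynomial.C 1) * (X - Polynomial.C ((m : K) - 1)) *
        (X - Polynomial.C (m : K))) (-2)) V ≤ V)
    (hV : V ≠ ⊥) :
    V = Am' K m := by
  have hinj : Set.InjOn (fun j : ℤ => if j = 0 ∨ (m : ℤ) ≤ j then 0 else ((j + 1 : ℤ) : K))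
      {i | ¬(i = 0 ∨ (m : ℤ) ≤ i)} := fun i hi j hj hij => by
    simpa [if_neg hi, if_neg hj] using hij
  obtain ⟨i, hi, hTi⟩ := exists_T_mem_of_map_le (hVA.trans Am'_eq_supported.le) _ _ hinj
    coeff_projE_op_X_zero hh hV
  have hT := T_neg_one_mem_of_T_mem hm h1 hneg1 hneg2 hi hTi
  refine le_antisymm hVA (Submodule.span_le.mpr ?_)
  rintro _ ⟨j, hj, rfl⟩
  exact T_mem_of_T_neg_one_mem hm h1 hneg1 h2 hT hj
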